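/- Let r : ℝ → ℝ be a differentiable function with r(θ) > 0 for all θ, define the plane curve c(θ) = r(θ)·(cos θ, sin θ), and let α ∈ (0, π). If the angle between c(θ) and c'(θ) equals α for every θ ∈ ℝ, then r(θ) = r(0)·e^{(cot α)·θ} for all θ; that is, every equiangular plane curve is a logarithmic spiral. -/

import Mathlib

/-!
Since `cos ∠(x, y) · ‖x‖‖y‖ = ⟪x, y⟫` and `sin ∠(x, y) · ‖x‖‖y‖ = √(‖x‖²‖y‖² - ⟪x, y⟫²)`,
the cotangent of the angle between `c = r·(cos θ, sin θ)` and
`c' = r'·(cos θ, sin θ) + r·(-sin θ, cos θ)` is `r r' / √(r² (r'² + r²) - r² r'²) = r' / r`.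
So an equiangular curve satisfies `r' = (cot α) r`, whose solutions are `r(0) e^{(cot α) θ}`.
-/

open Real

/-- The plane curve `c(θ) = r(θ)·(cos θ, sin θ)` with polar radius `r`. -/
noncomputable def polarCurve (r : ℝ → ℝ) (θ : ℝ) : EuclideanSpace ℝ (Fin 2) :=
  WithLp.toLp 2 ![r θ * Real.cos θ, r θ * Real.sin θ]

open InnerProductGeometry
open scoped RealInnerProductSpace

theorem InnerProductGeometry.cot_angle_mul_sqrt {V : Type*} [NormedAddCommGroup V]
    [InnerProductSpace ℝ V] {x y : V} (h : sin (angle x y) ≠ 0) :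
    cot (angle x y) * √(⟪x, x⟫ * ⟪y, y⟫ - ⟪x, y⟫ * ⟪x, y⟫) = ⟪x, y⟫ := by
  rw [← sin_angle_mul_norm_mul_norm, ← cos_angle_mul_norm_mul_norm, cot_eq_cos_div_sin]
  field_simp

theorem polarCurve_hasDerivAt {r : ℝ → ℝ} {θ : ℝ} (hr : DifferentiableAt ℝ r θ) :
    HasDerivAt (polarCurve r) (WithLp.toLp 2
      ![deriv r θ * cos θ - r θ * sin θ, deriv r θ * sin θ + r θ * cos θ]) θ := by
  have h : HasDerivAt (fun t => ![r t * cos t, r t * sin t])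
      ![deriv r θ * cos θ - r θ * sin θ, deriv r θ * sin θ + r θ * cos θ] θ := by
    rw [hasDerivAt_pi]
    intro i
    fin_cases i
    · exact (hr.hasDerivAt.mul (hasDerivAt_cos θ)).congr_deriv (by simp [sub_eq_add_neg])
    · exact (hr.hasDerivAt.mul (hasDerivAt_sin θ)).congr_deriv (by simp)
  exact (EuclideanSpace.equiv (Fin 2) ℝ).symm.hasFDerivAt.comp_hasDerivAt θ h

theorem inner_polarCurve_self (r : ℝ → ℝ) (θ : ℝ) :
    ⟪polarCurve r θ, polarCurve r θ⟫ = r θ ^ 2 := by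
  simp only [polarCurve, PiLp.inner_apply, RCLike.inner_apply, conj_trivial, Fin.sum_univ_two,
    Matrix.cons_val_zero, Matrix.cons_val_one]
  linear_combination r θ ^ 2 * sin_sq_add_cos_sq θ

theorem inner_polarCurve_deriv {r : ℝ → ℝ} {θ : ℝ} (hr : DifferentiableAt ℝ r θ) :
    ⟪polarCurve r θ, deriv (polarCurve r) θ⟫ = r θ * deriv r θ := by
  simp only [(polarCurve_hasDerivAt hr).deriv, polarCurve, PiLp.inner_apply, RCLike.inner_apply,
    conj_trivial, Fin.sum_univ_two, Matrix.cons_val_zero, Matrix.cons_val_one]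
  linear_combination r θ * deriv r θ * sin_sq_add_cos_sq θ

theorem inner_deriv_polarCurve_self {r : ℝ → ℝ} {θ : ℝ} (hr : DifferentiableAt ℝ r θ) :
    ⟪deriv (polarCurve r) θ, deriv (polarCurve r) θ⟫ = deriv r θ ^ 2 + r θ ^ 2 := by
  simp only [(polarCurve_hasDerivAt hr).deriv, PiLp.inner_apply, RCLike.inner_apply, conj_trivial,
    Fin.sum_univ_two, Matrix.cons_val_zero, Matrix.cons_val_one]
  linear_combination (deriv r θ ^ 2 + r θ ^ 2) * sin_sq_add_cos_sq θ

theorem deriv_eq_cot_angle_polarCurve_mul {r : ℝ → ℝ} {θ : ℝ} (hr : DifferentiableAt ℝ r θ)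
    (hr0 : r θ ≠ 0) (hsin : sin (angle (polarCurve r θ) (deriv (polarCurve r) θ)) ≠ 0) :
    deriv r θ = cot (angle (polarCurve r θ) (deriv (polarCurve r) θ)) * r θ := by
  have h := cot_angle_mul_sqrt hsin
  rw [inner_polarCurve_self, inner_polarCurve_deriv hr, inner_deriv_polarCurve_self hr,
    show r θ ^ 2 * (deriv r θ ^ 2 + r θ ^ 2) - r θ * deriv r θ * (r θ * deriv r θ)
      = (r θ ^ 2) ^ 2 by ring, sqrt_sq (sq_nonneg _)] at h
  apply mul_left_cancel₀ hr0
  linear_combination -h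

theorem eq_mul_exp_of_hasDerivAt_const_mul {f : ℝ → ℝ} {k : ℝ}
    (hf : ∀ x, HasDerivAt f (k * f x) x) (x : ℝ) : f x = f 0 * exp (k * x) := by
  have hg : ∀ t, HasDerivAt (fun t => f t * exp (-k * t)) 0 t := fun t =>
    ((hf t).fun_mul ((hasDerivAt_id' t).const_mul (-k)).exp).congr_deriv (by ring)
  have h := is_const_of_deriv_eq_zero (fun t => (hg t).differentiableAt)
    (fun t => (hg t).deriv) x 0
  rw [mul_zero, exp_zero, mul_one] at h
  rw [← h, mul_assoc, ← exp_add, neg_mul, neg_add_cancel, exp_zero, mul_one]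

/-- Every equiangular plane curve is a logarithmic spiral: if `r` is differentiable and
positive, `α ∈ (0, π)`, and the angle between `c(θ) = r(θ)·(cos θ, sin θ)` and `c'(θ)`
equals `α` for every `θ`, then `r(θ) = r(0)·e^{(cot α)θ}`. -/
theorem equiangular_curve_is_logSpiral (r : ℝ → ℝ) (hr : Differentiable ℝ r)
    (hrpos : ∀ θ, 0 < r θ) (α : ℝ) (hα : α ∈ Set.Ioo 0 π)
    (hangle : ∀ θ : ℝ,
      InnerProductGeometry.angle (polarCurve r θ) (deriv (polarCurve r) θ) = α) :
    ∀ θ : ℝ, r θ = r 0 * Real.exp (Real.cot α * θ) := by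
  have hsin : sin α ≠ 0 := (sin_pos_of_pos_of_lt_pi hα.1 hα.2).ne'
  refine eq_mul_exp_of_hasDerivAt_const_mul fun θ => ?_
  have h := deriv_eq_cot_angle_polarCurve_mul (hr θ) (hrpos θ).ne' (by rwa [hangle])
  rw [hangle] at h
  exact h ▸ (hr θ).hasDerivAt
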